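/- arXiv:1807.09146 — 6 statements merged into one kernel-verified Lean document; each statement's English description precedes it below -/
import Mathlib

section
/- If Q: R^n → R is a function of the form Q(d) = g^T d + (1/2) d^T H d + ψ(x+d) − ψ(x), where H is symmetric positive definite with H ⪰ mI for m > 0, ψ is convex, and d* is the minimizer of Q, then for any d satisfying Q(d) − Q(d*) ≤ η(Q(0) − Q(d*)) with η ∈ [0,1), one has g^T d + ψ(x+d) − ψ(x) ≤ −(1/(1+√η)) d^T H d ≤ −(m/(1+√η))‖d‖². -/
open scoped RealInnerProductSpace

/-- For the regularized quadratic model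
`Q(d) = ⟪g, d⟫ + (1/2)⟪d, H d⟫ + ψ(x+d) − ψ(x)` with `H` symmetric, `H ⪰ mI`,
`ψ` convex, `d*` the minimizer of `Q`, and `d` an `η`-approximate solution
(`Q(d) − Q(d*) ≤ η (Q 0 − Q(d*))`, `η ∈ [0,1)`), one has
`⟪g,d⟫ + ψ(x+d) − ψ(x) ≤ −(1/(1+√η)) ⟪d, H d⟫ ≤ −(m/(1+√η)) ‖d‖²`. -/
theorem stmt0 {n : ℕ}
    (g x : EuclideanSpace ℝ (Fin n))
    (H : EuclideanSpace ℝ (Fin n) →ₗ[ℝ] EuclideanSpace ℝ (Fin n))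
    (hHsymm : ∀ u v, ⟪H u, v⟫ = ⟪u, H v⟫)
    (m : ℝ) (hm : 0 < m)
    (hHm : ∀ v, m * ‖v‖ ^ 2 ≤ ⟪v, H v⟫)
    (ψ : EuclideanSpace ℝ (Fin n) → ℝ)
    (hψ : ConvexOn ℝ Set.univ ψ)
    (Q : EuclideanSpace ℝ (Fin n) → ℝ)
    (hQ : ∀ d, Q d = ⟪g, d⟫ + (1 / 2) * ⟪d, H d⟫ + ψ (x + d) - ψ x)
    (dstar : EuclideanSpace ℝ (Fin n))
    (hdstar : ∀ d, Q dstar ≤ Q d)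
    (η : ℝ) (hη0 : 0 ≤ η) (hη1 : η < 1)
    (d : EuclideanSpace ℝ (Fin n))
    (hd : Q d - Q dstar ≤ η * (Q 0 - Q dstar)) :
    ⟪g, d⟫ + ψ (x + d) - ψ x ≤ -(1 / (1 + Real.sqrt η)) * ⟪d, H d⟫ ∧
    -(1 / (1 + Real.sqrt η)) * ⟪d, H d⟫ ≤ -(m / (1 + Real.sqrt η)) * ‖d‖ ^ 2 := by
  set s : ℝ := Real.sqrt η with hs
  have hs0 : 0 ≤ s := Real.sqrt_nonneg η
  have h1s : (0:ℝ) < 1 + s := by linarith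
  set L : ℝ := ⟪g, d⟫ + ψ (x + d) - ψ x with hL
  set q : ℝ := ⟪d, H d⟫ with hq
  have hq0 : 0 ≤ q := le_trans (by positivity) (hHm d)
  -- Q 0 = 0
  have hQ0 : Q 0 = 0 := by
    rw [hQ]
    simp
  -- Q d = L + q/2
  have hQd : Q d = L + q / 2 := by rw [hQ]; ring
  -- model bound : Q (t•d) ≤ t L + t² q / 2 for t ∈ [0,1]
  have hmodel : ∀ t : ℝ, 0 ≤ t → t ≤ 1 → Q (t • d) ≤ t * L + t ^ 2 * q / 2 := by
    intro t ht0 ht1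
    rw [hQ]
    have hg : ⟪g, t • d⟫ = t * ⟪g, d⟫ := real_inner_smul_right g d t
    have hHq : ⟪t • d, H (t • d)⟫ = t ^ 2 * q := by
      rw [map_smul, real_inner_smul_left, real_inner_smul_right]
      ring
    have hconv : ψ (x + t • d) ≤ (1 - t) * ψ x + t * ψ (x + d) := by
      have h := hψ.2 (Set.mem_univ x) (Set.mem_univ (x + d))
        (by linarith : (0:ℝ) ≤ 1 - t) ht0 (by ring)
      have hpt : (1 - t) • x + t • (x + d) = x + t • d := by module
      rwa [hpt] at h
    rw [hg, hHq]
    nlinarith [hconv]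
  -- Q* ≤ 0
  have hQstar0 : Q dstar ≤ 0 := hQ0 ▸ hdstar 0
  -- main inequality: for t ∈ [0,1], L + q/2 ≤ (1-η) (t L + t² q / 2)
  have hmain : ∀ t : ℝ, 0 ≤ t → t ≤ 1 →
      L + q / 2 ≤ (1 - η) * (t * L + t ^ 2 * q / 2) := by
    intro t ht0 ht1
    have h1 : Q d ≤ (1 - η) * Q dstar := by
      rw [hQ0] at hd; nlinarith [hd]
    have h2 : Q dstar ≤ t * L + t ^ 2 * q / 2 := (hdstar _).trans (hmodel t ht0 ht1)
    have h3 : (1 - η) * Q dstar ≤ (1 - η) * (t * L + t ^ 2 * q / 2) := by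
      apply mul_le_mul_of_nonneg_left h2; linarith
    rw [hQd] at h1
    linarith
  clear_value s L q
  -- first conjunct : L ≤ -(1/(1+s)) q
  have hfirst : L ≤ -(1 / (1 + s)) * q := by
    rcases eq_or_lt_of_le hη0 with hη | hη
    · -- η = 0, s = 0, need L ≤ -q
      have hs' : s = 0 := by rw [hs, ← hη, Real.sqrt_zero]
      rw [hs']
      have hL1 : L ≤ -q := by
        apply le_of_forall_pos_le_add
        intro ε hε
        rcases le_or_gt q (2 * ε) with hqε | hqε
        · have := hmain 0 le_rfl zero_le_one
          rw [← hη] at this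
          nlinarith
        · have hqpos : 0 < q := by linarith
          have ht0 : (0:ℝ) ≤ 1 - ε / q := by
            have : ε / q ≤ 1 / 2 := by
              rw [div_le_div_iff₀ hqpos (by norm_num)]; linarith
            linarith
          have ht1 : 1 - ε / q ≤ 1 := by
            have := div_pos hε hqpos; linarith
          have := hmain (1 - ε / q) ht0 ht1
          rw [← hη] at this
          have heq : ε / q * q = ε := div_mul_cancel₀ ε hqpos.ne'
          nlinarith [div_pos hε hqpos]
      nlinarith
    · -- η > 0, s > 0
      have hspos : 0 < s := by rw [hs]; exact Real.sqrt_pos.mpr hη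
      have hs2 : s ^ 2 = η := by rw [hs]; exact Real.sq_sqrt hη0
      have ht0 : (0:ℝ) ≤ 1 / (1 + s) := by positivity
      have ht1 : 1 / (1 + s) ≤ 1 := by
        rw [div_le_one h1s]; linarith
      have hk := hmain (1 / (1 + s)) ht0 ht1
      rw [← hs2] at hk
      have hk2 : (L + q / 2) * (1 + s) ^ 2 ≤ (1 - s ^ 2) * (L * (1 + s) + q / 2) := by
        have h := mul_le_mul_of_nonneg_right hk (by positivity : (0:ℝ) ≤ (1 + s) ^ 2)
        have e : (1 - s ^ 2) * (1 / (1 + s) * L + (1 / (1 + s)) ^ 2 * q / 2) * (1 + s) ^ 2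
            = (1 - s ^ 2) * (L * (1 + s) + q / 2) := by
          field_simp
        linarith [e ▸ h]
      have hgoal : L * (1 + s) ≤ -q := by
        by_contra hcon
        push_neg at hcon
        have hns : 0 < s * (1 + s) := mul_pos hspos h1s
        have hprod := mul_lt_mul_of_pos_left hcon hns
        nlinarith [hk2, hprod]
      have e : -(1 / (1 + s)) * q = -q / (1 + s) := by ring
      rw [e, le_div_iff₀ h1s]
      linarith
  refine ⟨hfirst, ?_⟩
  -- second conjunct
  have hinvpos : (0:ℝ) < 1 / (1 + s) := by positivity
  have h2 := neg_le_neg (mul_le_mul_of_nonneg_left (hHm d) hinvpos.le)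
  rw [← hq] at h2
  have e : -(m / (1 + s)) * ‖d‖ ^ 2 = -(1 / (1 + s) * (m * ‖d‖ ^ 2)) := by ring
  rw [e]
  linarith [h2]
end

section
/- Let f: R^n → R be differentiable with L-Lipschitz gradient, ψ convex, F = f + ψ, and let d satisfy Δ := ∇f(x)^T d + ψ(x+d) − ψ(x) ≤ −c‖d‖² for some c > 0. Then for any γ ∈ (0,1), the Armijo condition F(x + αd) ≤ F(x) + αγΔ holds for all step sizes α ∈ (0, min{1, 2(1−γ)c/L}]. -/
/-!
Along the segment `x + α • d`, the descent lemma bounds the smooth part by its linearization plus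
`L / 2 * α ^ 2 * ‖d‖ ^ 2`, and convexity bounds `ψ` by its chord, so
`F (x + α • d) ≤ F x + α * Δ + L / 2 * α ^ 2 * ‖d‖ ^ 2`. Since `-Δ ≥ c * ‖d‖ ^ 2`, the step-size
bound `L * α ≤ 2 * (1 - γ) * c` makes the quadratic term at most `(1 - γ) * α * (-Δ)`.
-/

open scoped RealInnerProductSpace

theorem ConvexOn.apply_add_smul_le {E : Type*} [AddCommGroup E] [Module ℝ E] {s : Set E}
    {ψ : E → ℝ} (hψ : ConvexOn ℝ s ψ) {x d : E} (hx : x ∈ s) (hxd : x + d ∈ s) {α : ℝ}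
    (hα0 : 0 ≤ α) (hα1 : α ≤ 1) :
    ψ (x + α • d) ≤ ψ x + α * (ψ (x + d) - ψ x) := by
  have h := hψ.2 hx hxd (sub_nonneg.2 hα1) hα0 (sub_add_cancel 1 α)
  rw [show (1 - α) • x + α • (x + d) = x + α • d by module, smul_eq_mul, smul_eq_mul] at h
  linarith

section LipschitzGradient

variable {E : Type*} [NormedAddCommGroup E] [InnerProductSpace ℝ E] [CompleteSpace E]

theorem HasGradientAt.hasDerivAt_comp_add_smul {f : E → ℝ} {g x v : E} {t : ℝ}
    (hf : HasGradientAt f g (x + t • v)) :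
    HasDerivAt (fun s : ℝ => f (x + s • v)) ⟪g, v⟫ t := by
  have hline : HasDerivAt (fun s : ℝ => x + s • v) v t := by
    simpa using ((hasDerivAt_id t).smul_const v).const_add x
  have h := hf.hasFDerivAt.comp_hasDerivAt t hline
  simp only [InnerProductSpace.toDual_apply_apply] at h
  exact h

theorem le_add_inner_add_sq_of_lipschitz_gradient {f : E → ℝ} {gf : E → E} {L : ℝ}
    (hgrad : ∀ x, HasGradientAt f (gf x) x) (hLip : ∀ x y, ‖gf x - gf y‖ ≤ L * ‖x - y‖)
    (x y : E) : f y ≤ f x + ⟪gf x, y - x⟫ + L / 2 * ‖y - x‖ ^ 2 := by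
  set v := y - x
  have hderiv (t : ℝ) : HasDerivAt (fun s : ℝ => f (x + s • v)) ⟪gf (x + t • v), v⟫ t :=
    (hgrad _).hasDerivAt_comp_add_smul
  have hbound (t : ℝ) (ht : 0 ≤ t) : ⟪gf (x + t • v), v⟫ ≤ ⟪gf x, v⟫ + L * t * ‖v‖ ^ 2 :=
    calc ⟪gf (x + t • v), v⟫ = ⟪gf x, v⟫ + ⟪gf (x + t • v) - gf x, v⟫ := by
          rw [inner_sub_left]; ring
      _ ≤ ⟪gf x, v⟫ + ‖gf (x + t • v) - gf x‖ * ‖v‖ := by gcongr; exact real_inner_le_norm _ _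
      _ ≤ ⟪gf x, v⟫ + L * ‖t • v‖ * ‖v‖ := by gcongr; simpa using hLip (x + t • v) x
      _ = ⟪gf x, v⟫ + L * t * ‖v‖ ^ 2 := by rw [norm_smul, Real.norm_of_nonneg ht]; ring
  have hquadratic (t : ℝ) :
      HasDerivAt (fun s : ℝ => f x + s * ⟪gf x, v⟫ + L / 2 * s ^ 2 * ‖v‖ ^ 2)
        (⟪gf x, v⟫ + L * t * ‖v‖ ^ 2) t := by
    refine ((((hasDerivAt_id t).mul_const ⟪gf x, v⟫).const_add (f x)).add
      (((hasDerivAt_pow 2 t).const_mul (L / 2)).mul_const (‖v‖ ^ 2))).congr_deriv ?_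
    simp only [Nat.cast_ofNat]
    ring
  have h := image_le_of_deriv_right_le_deriv_boundary (a := 0) (b := 1)
    (fun t _ => (hderiv t).continuousAt.continuousWithinAt)
    (fun t _ => (hderiv t).hasDerivWithinAt) (by simp)
    (fun t _ => (hquadratic t).continuousAt.continuousWithinAt)
    (fun t _ => (hquadratic t).hasDerivWithinAt) (fun t ht => hbound t ht.1)
    (Set.right_mem_Icc.2 zero_le_one)
  simpa [v] using h

theorem add_apply_add_smul_le_of_lipschitz_gradient {f ψ : E → ℝ} {gf : E → E} {L : ℝ}
    (hgrad : ∀ x, HasGradientAt f (gf x) x) (hLip : ∀ x y, ‖gf x - gf y‖ ≤ L * ‖x - y‖)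
    (hψ : ConvexOn ℝ Set.univ ψ) (x d : E) {α : ℝ} (hα0 : 0 ≤ α) (hα1 : α ≤ 1) :
    f (x + α • d) + ψ (x + α • d) ≤
      f x + ψ x + α * (⟪gf x, d⟫ + ψ (x + d) - ψ x) + L / 2 * α ^ 2 * ‖d‖ ^ 2 := by
  have hf := le_add_inner_add_sq_of_lipschitz_gradient hgrad hLip x (x + α • d)
  rw [add_sub_cancel_left, real_inner_smul_right, norm_smul, Real.norm_of_nonneg hα0] at hf
  have hψα := hψ.apply_add_smul_le (Set.mem_univ x) (Set.mem_univ (x + d)) hα0 hα1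
  linarith

end LipschitzGradient

theorem stmt1_general {n : ℕ}
    (f : EuclideanSpace ℝ (Fin n) → ℝ)
    (gf : EuclideanSpace ℝ (Fin n) → EuclideanSpace ℝ (Fin n))
    (hgrad : ∀ x, HasGradientAt f (gf x) x)
    (L : ℝ) (hL : 0 < L)
    (hLip : ∀ x y, ‖gf x - gf y‖ ≤ L * ‖x - y‖)
    (ψ : EuclideanSpace ℝ (Fin n) → ℝ)
    (hψ : ConvexOn ℝ Set.univ ψ)
    (F : EuclideanSpace ℝ (Fin n) → ℝ)
    (hF : ∀ y, F y = f y + ψ y)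
    (x d : EuclideanSpace ℝ (Fin n))
    (Δ : ℝ) (hΔdef : Δ = ⟪gf x, d⟫ + ψ (x + d) - ψ x)
    (c : ℝ)
    (hΔ : Δ ≤ -c * ‖d‖ ^ 2)
    (γ : ℝ) (hγ1 : γ < 1) :
    ∀ α : ℝ, 0 < α → α ≤ min 1 (2 * (1 - γ) * c / L) →
      F (x + α • d) ≤ F x + α * γ * Δ := by
  intro α hα0 hα
  have hα1 : α ≤ 1 := hα.trans (min_le_left _ _)
  have hαL : L * α ≤ 2 * (1 - γ) * c := by
    have h := hα.trans (min_le_right _ _)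
    rw [le_div_iff₀ hL] at h
    linarith
  have hstep := add_apply_add_smul_le_of_lipschitz_gradient hgrad hLip hψ x d hα0.le hα1
  rw [← hΔdef] at hstep
  have hquad : L / 2 * α ^ 2 * ‖d‖ ^ 2 ≤ (1 - γ) * α * -Δ := by
    have hd : 0 ≤ α * ‖d‖ ^ 2 := by positivity
    nlinarith [mul_le_mul_of_nonneg_right hαL hd,
      mul_le_mul_of_nonneg_left hΔ (mul_nonneg (sub_nonneg.2 hγ1.le) hα0.le)]
  rw [hF, hF]
  linarith

/-- If `f` has `L`-Lipschitz gradient, `ψ` is convex, `F = f + ψ`,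
and the direction `d` satisfies `Δ := ⟪∇f(x), d⟫ + ψ(x+d) − ψ(x) ≤ −c‖d‖²` with
`c > 0`, then for any `γ ∈ (0,1)` the Armijo condition
`F(x + αd) ≤ F(x) + αγΔ` holds for all `α ∈ (0, min{1, 2(1−γ)c/L}]`. -/
theorem stmt1 {n : ℕ}
    (f : EuclideanSpace ℝ (Fin n) → ℝ)
    (gf : EuclideanSpace ℝ (Fin n) → EuclideanSpace ℝ (Fin n))
    (hgrad : ∀ x, HasGradientAt f (gf x) x)
    (L : ℝ) (hL : 0 < L)
    (hLip : ∀ x y, ‖gf x - gf y‖ ≤ L * ‖x - y‖)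
    (ψ : EuclideanSpace ℝ (Fin n) → ℝ)
    (hψ : ConvexOn ℝ Set.univ ψ)
    (F : EuclideanSpace ℝ (Fin n) → ℝ)
    (hF : ∀ y, F y = f y + ψ y)
    (x d : EuclideanSpace ℝ (Fin n))
    (Δ : ℝ) (hΔdef : Δ = ⟪gf x, d⟫ + ψ (x + d) - ψ x)
    (c : ℝ) (hc : 0 < c)
    (hΔ : Δ ≤ -c * ‖d‖ ^ 2)
    (γ : ℝ) (hγ0 : 0 < γ) (hγ1 : γ < 1) :
    ∀ α : ℝ, 0 < α → α ≤ min 1 (2 * (1 - γ) * c / L) →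
      F (x + α • d) ≤ F x + α * γ * Δ :=
  stmt1_general f gf hgrad L hL hLip ψ hψ F hF x d Δ hΔdef c hΔ γ hγ1
end

section
/- Suppose f: R^n → R is differentiable with blockwise Lipschitz constant L_i for block i (i.e., ‖∇_i f(x + U_i h) − ∇_i f(x)‖ ≤ L_i‖h‖ for all h), ψ is convex, and H_i ⪰ c_i I with c_i ∈ (0, L_i]. Then for α̂ = c_i/L_i and any d_i and any α ∈ [0, α̂], F(x + α U_i d_i) − F(x) ≤ α Q_i(d_i), where Q_i(d_i) = ∇_i f(x)^T d_i + (1/2) d_i^T H_i d_i + ψ(x + U_i d_i) − ψ(x). -/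
open scoped RealInnerProductSpace
open InnerProductSpace

/-! The block descent lemma bounds `f (x + α U d) - f x` by `α ⟪∇_i f x, d⟫ + (L/2) α² ‖d‖²`,
convexity bounds `ψ (x + α U d) - ψ x` by `α (ψ (x + U d) - ψ x)`, and `α ≤ c / L` makes the
quadratic term at most `(α/2) c ‖d‖² ≤ (α/2) ⟪d, H d⟫`. -/

theorem ConvexOn.sub_le_mul_sub {E : Type*} [AddCommGroup E] [Module ℝ E] {s : Set E}
    {ψ : E → ℝ} (hψ : ConvexOn ℝ s ψ) {x v : E} (hx : x ∈ s) (hxv : x + v ∈ s)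
    {α : ℝ} (hα₀ : 0 ≤ α) (hα₁ : α ≤ 1) :
    ψ (x + α • v) - ψ x ≤ α * (ψ (x + v) - ψ x) := by
  have hconv := hψ.2 hx hxv (sub_nonneg.mpr hα₁) hα₀ (sub_add_cancel 1 α)
  have hpoint : (1 - α) • x + α • (x + v) = x + α • v := by
    rw [smul_add, sub_smul, one_smul]; abel
  rw [hpoint, smul_eq_mul, smul_eq_mul] at hconv
  linarith

section Descent

variable {E : Type*} [NormedAddCommGroup E] [InnerProductSpace ℝ E] [CompleteSpace E]

theorem HasGradientAt.hasDerivAt_comp_smul {φ : E → ℝ} {g v : E} {t : ℝ}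
    (h : HasGradientAt φ g (t • v)) :
    HasDerivAt (fun s : ℝ => φ (s • v)) ⟪g, v⟫ t := by
  have := (hasGradientAt_iff_hasFDerivAt.mp h).comp_hasDerivAt t
    ((hasDerivAt_id t).smul_const v)
  simp only [Function.comp_def, toDual_apply_apply, one_smul] at this
  exact this

theorem HasGradientAt.of_comp_const_add {φ : E → ℝ} {g a : E}
    (h : HasGradientAt (fun y => φ (a + y)) g 0) : HasGradientAt φ g a := by
  rw [hasGradientAt_iff_hasFDerivAt] at h ⊢
  simpa using (hasFDerivAt_comp_add_left a).mp h

theorem sub_le_inner_add_of_norm_gradient_sub_le {φ : E → ℝ} {g : E → E} {L : ℝ}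
    (hφ : ∀ y, HasGradientAt φ (g y) y) (hg : ∀ y, ‖g y - g 0‖ ≤ L * ‖y‖) (v : E) :
    φ v - φ 0 ≤ ⟪g 0, v⟫ + L / 2 * ‖v‖ ^ 2 := by
  set D : ℝ → ℝ := fun t => L * ‖v‖ ^ 2 * t ^ 2 / 2 - φ (t • v) + t * ⟪g 0, v⟫
  have hD : ∀ t : ℝ, HasDerivAt D (L * ‖v‖ ^ 2 * t - ⟪g (t • v), v⟫ + ⟪g 0, v⟫) t := by
    intro t
    have hsq : HasDerivAt (fun t : ℝ => L * ‖v‖ ^ 2 * t ^ 2 / 2) (L * ‖v‖ ^ 2 * t) t :=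
      (((hasDerivAt_pow 2 t).const_mul (L * ‖v‖ ^ 2)).div_const 2).congr_deriv
        (by push_cast; ring)
    exact (hsq.sub (hφ (t • v)).hasDerivAt_comp_smul).add
      (by simpa using (hasDerivAt_id t).mul_const ⟪g 0, v⟫)
  have hmono : MonotoneOn D (Set.Icc 0 1) := by
    refine monotoneOn_of_hasDerivWithinAt_nonneg (convex_Icc 0 1)
      (fun t _ => (hD t).continuousAt.continuousWithinAt)
      (fun t _ => (hD t).hasDerivWithinAt) ?_
    intro t ht
    rw [interior_Icc] at ht
    have hinner : ⟪g (t • v) - g 0, v⟫ ≤ L * ‖v‖ ^ 2 * t :=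
      calc ⟪g (t • v) - g 0, v⟫ ≤ ‖g (t • v) - g 0‖ * ‖v‖ := real_inner_le_norm _ _
        _ ≤ L * ‖t • v‖ * ‖v‖ := by gcongr; exact hg _
        _ = L * ‖v‖ ^ 2 * t := by rw [norm_smul, Real.norm_of_nonneg ht.1.le]; ring
    rw [inner_sub_left] at hinner
    linarith
  have h01 := hmono (Set.left_mem_Icc.mpr zero_le_one) (Set.right_mem_Icc.mpr zero_le_one)
    zero_le_one
  simp only [D, zero_smul, one_smul] at h01
  linarith

end Descent

theorem block_descent {E F 𝓕 : Type*} [AddCommGroup E] [NormedAddCommGroup F]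
    [InnerProductSpace ℝ F] [CompleteSpace F] [FunLike 𝓕 F E] [AddMonoidHomClass 𝓕 F E]
    (f : E → ℝ) (U : 𝓕) (gi : E → F)
    (hgrad : ∀ z, HasGradientAt (fun h : F => f (z + U h)) (gi z) 0)
    {L : ℝ} {x : E} (hLip : ∀ h, ‖gi (x + U h) - gi x‖ ≤ L * ‖h‖) (h : F) :
    f (x + U h) - f x ≤ ⟪gi x, h⟫ + L / 2 * ‖h‖ ^ 2 := by
  have hφ : ∀ y, HasGradientAt (fun h : F => f (x + U h)) (gi (x + U y)) y := fun y =>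
    HasGradientAt.of_comp_const_add (by simpa only [map_add, add_assoc] using hgrad (x + U y))
  simpa using sub_le_inner_add_of_norm_gradient_sub_le hφ (by simpa using hLip) h

theorem stmt2_general {n ni : ℕ}
    (f ψ : EuclideanSpace ℝ (Fin n) → ℝ)
    (hψ : ConvexOn ℝ Set.univ ψ)
    (F : EuclideanSpace ℝ (Fin n) → ℝ)
    (hF : ∀ y, F y = f y + ψ y)
    (U : EuclideanSpace ℝ (Fin ni) →ₗᵢ[ℝ] EuclideanSpace ℝ (Fin n))
    (gi : EuclideanSpace ℝ (Fin n) → EuclideanSpace ℝ (Fin ni))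
    (hgrad : ∀ z, HasGradientAt (fun h : EuclideanSpace ℝ (Fin ni) => f (z + U h)) (gi z) 0)
    (L : ℝ) (hL : 0 < L)
    (hLip : ∀ z h, ‖gi (z + U h) - gi z‖ ≤ L * ‖h‖)
    (H : EuclideanSpace ℝ (Fin ni) →ₗ[ℝ] EuclideanSpace ℝ (Fin ni))
    (c : ℝ) (hcL : c ≤ L)
    (hH : ∀ v, c * ‖v‖ ^ 2 ≤ ⟪v, H v⟫)
    (x : EuclideanSpace ℝ (Fin n))
    (Q : EuclideanSpace ℝ (Fin ni) → ℝ)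
    (hQ : ∀ d, Q d = ⟪gi x, d⟫ + (1 / 2) * ⟪d, H d⟫ + ψ (x + U d) - ψ x) :
    ∀ (d : EuclideanSpace ℝ (Fin ni)) (α : ℝ), 0 ≤ α → α ≤ c / L →
      F (x + α • (U d : EuclideanSpace ℝ (Fin n))) - F x ≤ α * Q d := by
  intro d α hα₀ hαc
  have hαL : α * L ≤ c := (le_div_iff₀ hL).mp hαc
  have hα₁ : α ≤ 1 := hαc.trans ((div_le_one hL).mpr hcL)
  have hf : f (x + α • U d) - f x ≤ α * ⟪gi x, d⟫ + L / 2 * α ^ 2 * ‖d‖ ^ 2 := by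
    have := block_descent f U gi hgrad (hLip x) (α • d)
    rwa [map_smul, real_inner_smul_right, norm_smul, Real.norm_of_nonneg hα₀, mul_pow,
      ← mul_assoc] at this
  have hψα := hψ.sub_le_mul_sub (Set.mem_univ x) (Set.mem_univ (x + U d)) hα₀ hα₁
  have hquad : L / 2 * α ^ 2 * ‖d‖ ^ 2 ≤ α / 2 * ⟪d, H d⟫ :=
    calc L / 2 * α ^ 2 * ‖d‖ ^ 2 = α / 2 * (α * L) * ‖d‖ ^ 2 := by ring
      _ ≤ α / 2 * c * ‖d‖ ^ 2 := by gcongr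
      _ ≤ α / 2 * ⟪d, H d⟫ := by rw [mul_assoc]; gcongr; exact hH d
  rw [hF, hF, hQ]
  linarith

/-- With blockwise `L`-Lipschitz partial gradient for block `i`
(embedding `U`, a linear isometry, i.e. a column submatrix of the identity),
`ψ` convex, and `c I ⪯ H` with `0 < c ≤ L`, for `α̂ = c/L`, any `d` and any
`α ∈ [0, α̂]`: `F(x + α U d) − F(x) ≤ α Q(d)` where
`Q(d) = ⟪∇_i f(x), d⟫ + (1/2)⟪d, H d⟫ + ψ(x + U d) − ψ(x)`. -/
theorem stmt2 {n ni : ℕ}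
    (f ψ : EuclideanSpace ℝ (Fin n) → ℝ)
    (hψ : ConvexOn ℝ Set.univ ψ)
    (F : EuclideanSpace ℝ (Fin n) → ℝ)
    (hF : ∀ y, F y = f y + ψ y)
    (U : EuclideanSpace ℝ (Fin ni) →ₗᵢ[ℝ] EuclideanSpace ℝ (Fin n))
    (gi : EuclideanSpace ℝ (Fin n) → EuclideanSpace ℝ (Fin ni))
    (hgrad : ∀ z, HasGradientAt (fun h : EuclideanSpace ℝ (Fin ni) => f (z + U h)) (gi z) 0)
    (L : ℝ) (hL : 0 < L)
    (hLip : ∀ z h, ‖gi (z + U h) - gi z‖ ≤ L * ‖h‖)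
    (H : EuclideanSpace ℝ (Fin ni) →ₗ[ℝ] EuclideanSpace ℝ (Fin ni))
    (c : ℝ) (hc0 : 0 < c) (hcL : c ≤ L)
    (hH : ∀ v, c * ‖v‖ ^ 2 ≤ ⟪v, H v⟫)
    (x : EuclideanSpace ℝ (Fin n))
    (Q : EuclideanSpace ℝ (Fin ni) → ℝ)
    (hQ : ∀ d, Q d = ⟪gi x, d⟫ + (1 / 2) * ⟪d, H d⟫ + ψ (x + U d) - ψ x) :
    ∀ (d : EuclideanSpace ℝ (Fin ni)) (α : ℝ), 0 ≤ α → α ≤ c / L →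
      F (x + α • (U d : EuclideanSpace ℝ (Fin n))) - F x ≤ α * Q d :=
  stmt2_general f ψ hψ F hF U gi hgrad L hL hLip H c hcL hH x Q hQ
end

section
/- Let f be convex differentiable and ψ convex on R^n, x a point, x̄ a minimizer of F = f + ψ with value F*. Let θ ∈ (0,1] and let H ∈ R^{n×n} be positive semidefinite. Then for any λ ∈ [0,1], min_d {∇f(x)^T(θd) + (θ²/2)d^T H d + θ(ψ(x+d) − ψ(x))} ≤ θλ(F* − F(x)) + (θ²λ²/2)(x̄ − x)^T H (x̄ − x). -/
open scoped RealInnerProductSpace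

/-- First-order condition for a convex differentiable function. -/
lemma grad_ineq_aux {E : Type*} [NormedAddCommGroup E] [InnerProductSpace ℝ E] [CompleteSpace E]
    {f : E → ℝ} {g x : E} (hf : ConvexOn ℝ Set.univ f) (hg : HasGradientAt f g x)
    (y : E) : ⟪g, y - x⟫ ≤ f y - f x := by
  rcases eq_or_ne y x with rfl | hyx
  · simp
  · set φ : ℝ → ℝ := fun t => f (x + t • (y - x)) with hφ
    have hφconv : ConvexOn ℝ Set.univ φ := by
      have h := hf.comp_affineMap (AffineMap.lineMap x y : ℝ →ᵃ[ℝ] E)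
      have he : (f ∘ ⇑(AffineMap.lineMap x y)) = φ := by
        funext t; simp [hφ, AffineMap.lineMap_apply, add_comm]
      simpa [he] using h
    have hderiv : HasDerivAt φ ⟪g, y - x⟫ 0 := by
      have h0 : HasDerivAt (fun t : ℝ => x + t • (y - x)) (y - x) 0 := by
        simpa using (((hasDerivAt_id (0:ℝ)).smul_const (y - x)).const_add x)
      have hfd : HasFDerivAt f (InnerProductSpace.toDual ℝ E g) x := hg
      have hfd' : HasFDerivAt f (InnerProductSpace.toDual ℝ E g) (x + (0:ℝ) • (y - x)) := by
        simpa using hfd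
      have := hfd'.comp_hasDerivAt (0:ℝ) h0
      simpa [hφ, InnerProductSpace.toDual_apply_apply, Function.comp_def] using this
    have hslope := hφconv.le_slope_of_hasDerivAt (Set.mem_univ (0:ℝ))
      (Set.mem_univ (1:ℝ)) one_pos hderiv
    have : slope φ 0 1 = f y - f x := by
      simp [slope, hφ]
    linarith [hslope, this.le, this.ge]

/-- For convex differentiable `f`, convex `ψ`, `F = f + ψ` with
minimizer `x̄` and minimum `F*`, psd `H`, `θ ∈ (0,1]` and `λ ∈ [0,1]`,
`min_d {⟪∇f(x), θd⟫ + (θ²/2)⟪d, H d⟫ + θ(ψ(x+d) − ψ(x))}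
  ≤ θλ(F* − F(x)) + (θ²λ²/2)⟪x̄ − x, H(x̄ − x)⟫`. -/
theorem stmt13 {n : ℕ}
    (f ψ : EuclideanSpace ℝ (Fin n) → ℝ)
    (gf : EuclideanSpace ℝ (Fin n) → EuclideanSpace ℝ (Fin n))
    (hgrad : ∀ x, HasGradientAt f (gf x) x)
    (hf : ConvexOn ℝ Set.univ f)
    (hψ : ConvexOn ℝ Set.univ ψ)
    (F : EuclideanSpace ℝ (Fin n) → ℝ)
    (hF : ∀ y, F y = f y + ψ y)
    (xbar : EuclideanSpace ℝ (Fin n))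
    (hxbar : ∀ y, F xbar ≤ F y)
    (Fstar : ℝ) (hFstar : Fstar = F xbar)
    (H : EuclideanSpace ℝ (Fin n) →ₗ[ℝ] EuclideanSpace ℝ (Fin n))
    (hHsymm : ∀ u v, ⟪H u, v⟫ = ⟪u, H v⟫)
    (hHpsd : ∀ v, 0 ≤ ⟪v, H v⟫)
    (x : EuclideanSpace ℝ (Fin n))
    (θ lam : ℝ) (hθ0 : 0 < θ) (hθ1 : θ ≤ 1) (hlam0 : 0 ≤ lam) (hlam1 : lam ≤ 1) :
    ∃ d : EuclideanSpace ℝ (Fin n),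
      ⟪gf x, θ • d⟫ + θ ^ 2 / 2 * ⟪d, H d⟫ + θ * (ψ (x + d) - ψ x) ≤
        θ * lam * (Fstar - F x) + θ ^ 2 * lam ^ 2 / 2 * ⟪xbar - x, H (xbar - x)⟫ := by
  refine ⟨lam • (xbar - x), ?_⟩
  have hgi : ⟪gf x, xbar - x⟫ ≤ f xbar - f x := grad_ineq_aux hf (hgrad x) xbar
  -- convexity of ψ
  have hψi : ψ (x + lam • (xbar - x)) - ψ x ≤ lam * (ψ xbar - ψ x) := by
    have := hψ.2 (Set.mem_univ x) (Set.mem_univ xbar)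
      (show (0:ℝ) ≤ 1 - lam by linarith) hlam0 (by ring)
    have hpt : (1 - lam) • x + lam • xbar = x + lam • (xbar - x) := by
      simp [smul_sub, sub_smul]; abel
    rw [hpt] at this
    simp only [smul_eq_mul] at this
    linarith [this]
  -- quadratic term
  have hquad : ⟪lam • (xbar - x), H (lam • (xbar - x))⟫
      = lam ^ 2 * ⟪xbar - x, H (xbar - x)⟫ := by
    rw [map_smul, real_inner_smul_left, real_inner_smul_right]; ring
  have hinner : ⟪gf x, θ • (lam • (xbar - x))⟫ = θ * lam * ⟪gf x, xbar - x⟫ := by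
    rw [real_inner_smul_right, real_inner_smul_right]; ring
  rw [hinner, hquad]
  have hFx : Fstar - F x = (f xbar - f x) + (ψ xbar - ψ x) := by
    rw [hFstar, hF xbar, hF x]; ring
  rw [hFx]
  have h1 : θ * lam * ⟪gf x, xbar - x⟫ ≤ θ * lam * (f xbar - f x) :=
    mul_le_mul_of_nonneg_left hgi (by positivity)
  have h2 : θ * (ψ (x + lam • (xbar - x)) - ψ x) ≤ θ * (lam * (ψ xbar - ψ x)) :=
    mul_le_mul_of_nonneg_left hψi hθ0.le
  nlinarith [hHpsd (xbar - x)]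
end

section
/- Let H ∈ R^{m×m} be symmetric with mI ⪯ H ⪯ MI for 0 < m ≤ M, ψ: R^m → R convex, g ∈ R^m, and define d_H = arg min_d [g^T d + (1/2)d^T H d + ψ(x+d)] and d_I = arg min_d [g^T d + (1/2)d^T d + ψ(x+d)]. Then ‖d_I‖ ≤ ((1 + 1/m + √(1 − 2/M + 1/m²))/2) · M · ‖d_H‖. -/
open scoped RealInnerProductSpace




private lemma limit_aux {A B : ℝ} (hB : 0 ≤ B)
    (h : ∀ ε : ℝ, 0 < ε → ε ≤ 1 → 0 ≤ A + ε * B) : 0 ≤ A := by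
  by_contra hA
  push_neg at hA
  have hB1 : (0:ℝ) < B + 1 := by linarith
  have hε' : 0 < -A / (B + 1) := div_pos (by linarith) hB1
  set ε := min 1 (-A / (B + 1)) with hεdef
  have h1 : 0 < ε := lt_min one_pos hε'
  have h2 : ε ≤ 1 := min_le_left _ _
  have h3 : ε ≤ -A / (B + 1) := min_le_right _ _
  have h4 := h ε h1 h2
  have h5 : ε * B ≤ (-A / (B + 1)) * B := mul_le_mul_of_nonneg_right h3 hB
  have h6 : (-A / (B + 1)) * B < -A := by
    rw [div_mul_eq_mul_div, div_lt_iff₀ hB1]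
    nlinarith
  linarith

variable {p : ℕ}

private lemma VI (ψ : EuclideanSpace ℝ (Fin p) → ℝ)
    (hψ : ConvexOn ℝ Set.univ ψ)
    (g x : EuclideanSpace ℝ (Fin p))
    (K : EuclideanSpace ℝ (Fin p) →ₗ[ℝ] EuclideanSpace ℝ (Fin p))
    (hKsymm : ∀ a b, ⟪K a, b⟫ = ⟪a, K b⟫)
    (hKpos : ∀ z, 0 ≤ ⟪z, K z⟫)
    (v : EuclideanSpace ℝ (Fin p))
    (hv : ∀ d, ⟪g, v⟫ + (1 / 2) * ⟪v, K v⟫ + ψ (x + v) ≤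
      ⟪g, d⟫ + (1 / 2) * ⟪d, K d⟫ + ψ (x + d))
    (u : EuclideanSpace ℝ (Fin p)) :
    0 ≤ ⟪g, u - v⟫ + ⟪u - v, K v⟫ + ψ (x + u) - ψ (x + v) := by
  set z := u - v with hz
  apply limit_aux (B := ⟪z, K z⟫ / 2) (by linarith [hKpos z])
  intro ε hε0 hε1
  have hd := hv (v + ε • z)
  have hconv : ψ (x + (v + ε • z)) ≤ (1 - ε) * ψ (x + v) + ε * ψ (x + u) := by
    have hx : x + (v + ε • z) = (1 - ε) • (x + v) + ε • (x + u) := by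
      rw [hz]; module
    rw [hx]
    exact hψ.2 (Set.mem_univ _) (Set.mem_univ _) (by linarith) hε0.le (by ring)
  have hg : ⟪g, v + ε • z⟫ = ⟪g, v⟫ + ε * ⟪g, z⟫ := by
    rw [inner_add_right, real_inner_smul_right]
  have hK : ⟪v + ε • z, K (v + ε • z)⟫
      = ⟪v, K v⟫ + 2 * ε * ⟪z, K v⟫ + ε ^ 2 * ⟪z, K z⟫ := by
    rw [map_add, map_smul]
    simp only [inner_add_left, inner_add_right, real_inner_smul_left, real_inner_smul_right]
    have hvz : ⟪v, K z⟫ = ⟪z, K v⟫ := by rw [← hKsymm z v, real_inner_comm]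
    rw [hvz]; ring
  rw [hg, hK] at hd
  have key : 0 ≤ ε * ((⟪g, z⟫ + ⟪z, K v⟫ + ψ (x + u) - ψ (x + v)) + ε * (⟪z, K z⟫ / 2)) := by
    nlinarith [hd, hconv]
  have := le_of_mul_le_mul_left
    (by linarith : ε * 0 ≤ ε * ((⟪g, z⟫ + ⟪z, K v⟫ + ψ (x + u) - ψ (x + v)) + ε * (⟪z, K z⟫ / 2)))
    hε0
  linarith

private lemma psdCS (K : EuclideanSpace ℝ (Fin p) →ₗ[ℝ] EuclideanSpace ℝ (Fin p))
    (hKsymm : ∀ a b, ⟪K a, b⟫ = ⟪a, K b⟫)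
    (hKpos : ∀ z, 0 ≤ ⟪z, K z⟫)
    (a b : EuclideanSpace ℝ (Fin p)) :
    ⟪a, K b⟫ ^ 2 ≤ ⟪a, K a⟫ * ⟪b, K b⟫ := by
  have hquad : ∀ r : ℝ, 0 ≤ ⟪b, K b⟫ * (r * r) + (2 * ⟪a, K b⟫) * r + ⟪a, K a⟫ := by
    intro r
    have hpos := hKpos (a + r • b)
    have hexp : ⟪a + r • b, K (a + r • b)⟫
        = ⟪b, K b⟫ * (r * r) + (2 * ⟪a, K b⟫) * r + ⟪a, K a⟫ := by
      rw [map_add, map_smul]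
      simp only [inner_add_left, inner_add_right, real_inner_smul_left, real_inner_smul_right]
      have hba : ⟪b, K a⟫ = ⟪a, K b⟫ := by rw [← hKsymm a b, real_inner_comm]
      rw [hba]; ring
    linarith [hexp ▸ hpos]
  have hd := discrim_le_zero hquad
  rw [discrim] at hd
  nlinarith [hd]


private lemma Vlem (m M u : ℝ) (hm : 0 < m) (hmM : m ≤ M) (hu : 0 ≤ u)
    (huu : M*u^2 = M*(m^2+1) - 2*m^2) (hul : 1 - m ≤ u)
    (hcond : (M+m)*(m+1+u) ≤ 4*m) :
    0 ≤ (4-(M+m))*(M+m)*M*(m+1+u)^2 - 8*m*(M+m)*(m+1+u) + 16*m^3 := by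
  nlinarith [sq_nonneg (u-(1-m)), mul_nonneg (sub_nonneg.2 hmM) hu, sq_nonneg (M-m),
    mul_pos hm (lt_of_lt_of_le hm hmM), sq_nonneg (m+1+u), mul_nonneg hu hu,
    mul_nonneg (sub_nonneg.2 hul) (sub_nonneg.2 hmM),
    mul_nonneg (mul_nonneg (sub_nonneg.2 hul) (sub_nonneg.2 hmM)) hm.le,
    sq_nonneg (u-1+m), mul_nonneg (sub_nonneg.2 hcond) hm.le,
    mul_nonneg (sub_nonneg.2 hcond) (sub_nonneg.2 hmM)]

private lemma keylem (m M C u h s q : ℝ) (hm : 0 < m) (hmM : m ≤ M) (hu0 : 0 ≤ u)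
    (huu : M*u^2 = M*(m^2+1) - 2*m^2) (hul : 1 - m ≤ u)
    (hCm : 2 * m * C = M * (m + 1 + u)) (hC1 : 1 ≤ C) (hCM : M ≤ C)
    (hh : 0 ≤ h) (hs : 0 ≤ s) (hsM : s ≤ M * h)
    (hf2 : s ^ 2 + m * M * h ^ 2 ≤ (M + m) * q) :
    (h + s) * C * h ≤ C ^ 2 * h ^ 2 + q := by
  have hM : 0 < M := lt_of_lt_of_le hm hmM
  have hT : (0:ℝ) < M + m := by linarith
  have hm2 : (0:ℝ) < 2 * m := by linarith
  have main : (M + m) * ((h + s) * C * h)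
      ≤ (M + m) * (C ^ 2 * h ^ 2) + (s ^ 2 + m * M * h ^ 2) := by
    rcases le_or_gt (2 * M) ((M + m) * C) with hcase | hcase
    · have e0 : 0 ≤ ((M + m) * C - 2 * M) * h := mul_nonneg (by linarith) hh
      have e1 : 0 ≤ (M * h - s) * ((M + m) * C * h - s - M * h) := by
        apply mul_nonneg (by linarith)
        linarith [e0, hsM]
      have e2 : 0 ≤ (M + m) * (C - 1) * (C - M) * h ^ 2 :=
        mul_nonneg (mul_nonneg (mul_nonneg hT.le (by linarith)) (by linarith)) (sq_nonneg h)
      have iden : (M + m) * (C ^ 2 * h ^ 2) + (s ^ 2 + m * M * h ^ 2)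
          - (M + m) * ((h + s) * C * h)
          = (M * h - s) * ((M + m) * C * h - s - M * h)
            + (M + m) * (C - 1) * (C - M) * h ^ 2 := by ring
      linarith [e1, e2, iden]
    · have hcond : (M + m) * (m + 1 + u) ≤ 4 * m := by
        by_contra hx
        push_neg at hx
        have f := mul_lt_mul_of_pos_left hcase hm2
        have e : (M + m) * (2 * m * C) = M * ((M + m) * (m + 1 + u)) := by
          rw [hCm]; ring
        linarith [f, e, mul_lt_mul_of_pos_left hx hM]
      have hV := Vlem m M u hm hmM hu0 huu hul hcond
      have hVC : 4 * m ^ 2 * ((4 - (M + m)) * (M + m) * C ^ 2 - 4 * (M + m) * C + 4 * m * M)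
          = M * ((4 - (M + m)) * (M + m) * M * (m + 1 + u) ^ 2
            - 8 * m * (M + m) * (m + 1 + u) + 16 * m ^ 3) := by
        linear_combination ((4 - (M + m)) * (M + m) * (2 * m * C + M * (m + 1 + u))
          - 8 * m * (M + m)) * hCm
      have hV' : 0 ≤ (4 - (M + m)) * (M + m) * C ^ 2 - 4 * (M + m) * C + 4 * m * M := by
        have h1 : 4 * m ^ 2 * 0 ≤ 4 * m ^ 2 * ((4 - (M + m)) * (M + m) * C ^ 2 - 4 * (M + m) * C + 4 * m * M) := by
          rw [hVC]
          simpa using mul_nonneg hM.le hV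
        exact le_of_mul_le_mul_left h1 (by positivity)
      have iden2 : 4 * ((M + m) * (C ^ 2 * h ^ 2) + (s ^ 2 + m * M * h ^ 2)
          - (M + m) * ((h + s) * C * h))
          = (2 * s - (M + m) * C * h) ^ 2
            + h ^ 2 * ((4 - (M + m)) * (M + m) * C ^ 2 - 4 * (M + m) * C + 4 * m * M) := by
        ring
      linarith [sq_nonneg (2 * s - (M + m) * C * h), mul_nonneg (sq_nonneg h) hV', iden2]
  have step : (M + m) * ((h + s) * C * h) ≤ (M + m) * (C ^ 2 * h ^ 2 + q) := by
    linarith [main, hf2]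
  exact le_of_mul_le_mul_left step hT


private lemma scalar_key (m M D t h s q : ℝ) (hm : 0 < m) (hmM : m ≤ M)
    (hD0 : 0 ≤ D) (hD2 : D ^ 2 = 1 - 2 / M + 1 / m ^ 2)
    (ht : 0 ≤ t) (hh : 0 ≤ h) (hs : 0 ≤ s)
    (hf1 : t ^ 2 ≤ t * h + t * s - q)
    (hf2 : s ^ 2 + m * M * h ^ 2 ≤ (M + m) * q)
    (hqM : q ≤ M * h ^ 2) :
    t ≤ (1 + 1 / m + D) / 2 * M * h := by
  have hM : 0 < M := lt_of_lt_of_le hm hmM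
  have hm0 : m ≠ 0 := ne_of_gt hm
  have hM0 : M ≠ 0 := ne_of_gt hM
  have hT : (0:ℝ) < M + m := by linarith
  have hm2 : (0:ℝ) < 2 * m := by linarith
  set C : ℝ := (1 + 1 / m + D) / 2 * M with hC
  set u : ℝ := m * D with hudef
  clear_value C u
  have hu0 : 0 ≤ u := by rw [hudef]; exact mul_nonneg hm.le hD0
  have huu : M * u ^ 2 = M * (m ^ 2 + 1) - 2 * m ^ 2 := by
    rw [hudef]
    have hu2 : (m * D) ^ 2 = m ^ 2 * D ^ 2 := by ring
    rw [hu2, hD2]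
    field_simp
    ring
  have hCm : 2 * m * C = M * (m + 1 + u) := by
    rw [hC, hudef]; field_simp
  clear hC hudef hD2 hD0
  have hsq : (1 - m) ^ 2 ≤ u ^ 2 := by
    have h1 : M * ((1 - m) ^ 2) ≤ M * u ^ 2 := by
      rw [huu]
      have : m * m ≤ m * M := mul_le_mul_of_nonneg_left hmM hm.le
      linarith
    exact le_of_mul_le_mul_left h1 hM
  have hul : 1 - m ≤ u := by
    rcases le_or_gt (1 - m) 0 with h' | h'
    · linarith
    · by_contra hx
      push_neg at hx
      have := mul_self_lt_mul_self hu0 hx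
      linarith [hsq]
  have hul2 : m - 1 ≤ u := by
    rcases le_or_gt (m - 1) 0 with h' | h'
    · linarith
    · by_contra hx
      push_neg at hx
      have := mul_self_lt_mul_self hu0 hx
      linarith [hsq]
  have hC1 : 1 ≤ C := by
    have e : M * 2 ≤ M * (m + 1 + u) :=
      mul_le_mul_of_nonneg_left (by linarith) hM.le
    have h' : 2 * m * 1 ≤ 2 * m * C := by rw [hCm]; linarith
    exact le_of_mul_le_mul_left h' hm2
  have hCM : M ≤ C := by
    have e : M * (2 * m) ≤ M * (m + 1 + u) :=
      mul_le_mul_of_nonneg_left (by linarith) hM.le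
    have h' : 2 * m * M ≤ 2 * m * C := by rw [hCm]; linarith
    exact le_of_mul_le_mul_left h' hm2
  have hs2 : s ^ 2 ≤ M ^ 2 * h ^ 2 := by
    have := mul_le_mul_of_nonneg_left hqM hT.le
    linarith [this, hf2]
  have hsM : s ≤ M * h := by
    by_contra hcon
    push_neg at hcon
    have hMh : 0 ≤ M * h := mul_nonneg hM.le hh
    have h0 : 0 < s := lt_of_le_of_lt hMh hcon
    nlinarith [mul_pos (sub_pos.2 hcon) (by linarith : (0:ℝ) < s + M * h), hs2]
  have key := keylem m M C u h s q hm hmM hu0 huu hul hCm hC1 hCM hh hs hsM hf2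
  by_contra hcon
  push_neg at hcon
  have h1 : 0 < t - C * h := by linarith
  have hf : (1 + M) * h ≤ 2 * C * h := mul_le_mul_of_nonneg_right (by linarith) hh
  have h2 : 0 < t + C * h - h - s := by linarith [hf, hsM]
  linarith [mul_pos h1 h2, key, hf1]

/-- Tseng–Yun Lemma 3: With `m I ⪯ H ⪯ M I`, `0 < m ≤ M`,
`ψ` convex, and `d_H`, `d_I` the minimizers of the `H`- and identity-metric
subproblems respectively, one has
`‖d_I‖ ≤ ((1 + 1/m + √(1 − 2/M + 1/m²))/2) M ‖d_H‖`. -/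
theorem stmt17 {p : ℕ}
    (ψ : EuclideanSpace ℝ (Fin p) → ℝ)
    (hψ : ConvexOn ℝ Set.univ ψ)
    (g x : EuclideanSpace ℝ (Fin p))
    (H : EuclideanSpace ℝ (Fin p) →ₗ[ℝ] EuclideanSpace ℝ (Fin p))
    (hHsymm : ∀ u v, ⟪H u, v⟫ = ⟪u, H v⟫)
    (m M : ℝ) (hm : 0 < m) (hmM : m ≤ M)
    (hHlow : ∀ v, m * ‖v‖ ^ 2 ≤ ⟪v, H v⟫)
    (hHup : ∀ v, ⟪v, H v⟫ ≤ M * ‖v‖ ^ 2)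
    (dH dI : EuclideanSpace ℝ (Fin p))
    (hdH : ∀ d, ⟪g, dH⟫ + (1 / 2) * ⟪dH, H dH⟫ + ψ (x + dH) ≤
      ⟪g, d⟫ + (1 / 2) * ⟪d, H d⟫ + ψ (x + d))
    (hdI : ∀ d, ⟪g, dI⟫ + (1 / 2) * ‖dI‖ ^ 2 + ψ (x + dI) ≤
      ⟪g, d⟫ + (1 / 2) * ‖d‖ ^ 2 + ψ (x + d)) :
    ‖dI‖ ≤ (1 + 1 / m + Real.sqrt (1 - 2 / M + 1 / m ^ 2)) / 2 * M * ‖dH‖ := by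
  have hM : 0 < M := lt_of_lt_of_le hm hmM
  have hHpos : ∀ z, 0 ≤ ⟪z, H z⟫ := fun z => le_trans (by positivity) (hHlow z)
  have hdI' : ∀ d, ⟪g, dI⟫ + (1 / 2) * ⟪dI, LinearMap.id (R := ℝ) dI⟫ + ψ (x + dI) ≤
      ⟪g, d⟫ + (1 / 2) * ⟪d, LinearMap.id (R := ℝ) d⟫ + ψ (x + d) := by
    intro d
    simp only [LinearMap.id_coe, id_eq, real_inner_self_eq_norm_sq]
    exact hdI d
  have hidsymm : ∀ a b : EuclideanSpace ℝ (Fin p),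
      ⟪LinearMap.id (R := ℝ) a, b⟫ = ⟪a, LinearMap.id (R := ℝ) b⟫ := by
    intro a b; simp only [LinearMap.id_coe, id_eq]
  have hidpos : ∀ z : EuclideanSpace ℝ (Fin p), 0 ≤ ⟪z, LinearMap.id (R := ℝ) z⟫ := by
    intro z; simp only [LinearMap.id_coe, id_eq]; exact real_inner_self_nonneg
  have vi1 := VI ψ hψ g x H hHsymm hHpos dH hdH dI
  have vi2 := VI ψ hψ g x (LinearMap.id (R := ℝ)) hidsymm hidpos dI hdI' dH
  simp only [LinearMap.id_coe, id_eq] at vi2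
  have hsum : ‖dI‖ ^ 2 ≤ ⟪dI, dH⟫ + ⟪dI, H dH⟫ - ⟪dH, H dH⟫ := by
    have e1 : ⟪g, dI - dH⟫ = ⟪g, dI⟫ - ⟪g, dH⟫ := inner_sub_right _ _ _
    have e2 : ⟪g, dH - dI⟫ = ⟪g, dH⟫ - ⟪g, dI⟫ := inner_sub_right _ _ _
    have e3 : ⟪dI - dH, H dH⟫ = ⟪dI, H dH⟫ - ⟪dH, H dH⟫ := inner_sub_left _ _ _
    have e4 : ⟪dH - dI, dI⟫ = ⟪dH, dI⟫ - ⟪dI, dI⟫ := inner_sub_left _ _ _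
    have e5 : ⟪dI, dI⟫ = ‖dI‖ ^ 2 := real_inner_self_eq_norm_sq dI
    have e6 : ⟪dH, dI⟫ = ⟪dI, dH⟫ := real_inner_comm _ _
    rw [e1, e3] at vi1
    rw [e2, e4, e5, e6] at vi2
    linarith
  set A : EuclideanSpace ℝ (Fin p) →ₗ[ℝ] EuclideanSpace ℝ (Fin p) :=
    H - m • LinearMap.id with hA
  have hAapp : ∀ z, A z = H z - m • z := by
    intro z; simp [hA, LinearMap.sub_apply, LinearMap.smul_apply]
  have hAsymm : ∀ a b, ⟪A a, b⟫ = ⟪a, A b⟫ := by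
    intro a b
    rw [hAapp, hAapp, inner_sub_left, inner_sub_right, real_inner_smul_left,
      real_inner_smul_right, hHsymm]
  have hApos : ∀ z, 0 ≤ ⟪z, A z⟫ := by
    intro z
    rw [hAapp, inner_sub_right, real_inner_smul_right, real_inner_self_eq_norm_sq]
    linarith [hHlow z]
  have hAup : ∀ z, ⟪z, A z⟫ ≤ (M - m) * ‖z‖ ^ 2 := by
    intro z
    rw [hAapp, inner_sub_right, real_inner_smul_right, real_inner_self_eq_norm_sq]
    linarith [hHup z]
  have hAbound : ⟪A dH, A dH⟫ ≤ (M - m) * ⟪dH, A dH⟫ := by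
    have hcs := psdCS A hAsymm hApos dH (A dH)
    have hx : ⟪dH, A (A dH)⟫ = ⟪A dH, A dH⟫ := by rw [← hAsymm]
    rw [hx] at hcs
    have hup := hAup (A dH)
    rw [← real_inner_self_eq_norm_sq] at hup
    rcases le_or_gt ⟪A dH, A dH⟫ 0 with h0 | h0
    · exact le_trans h0 (mul_nonneg (by linarith) (hApos dH))
    · have hmul : ⟪A dH, A dH⟫ * ⟪A dH, A dH⟫
          ≤ ((M - m) * ⟪dH, A dH⟫) * ⟪A dH, A dH⟫ := by
        nlinarith [hApos dH]
      exact le_of_mul_le_mul_right hmul h0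
  have hAdH1 : ⟪dH, A dH⟫ = ⟪dH, H dH⟫ - m * ‖dH‖ ^ 2 := by
    rw [hAapp, inner_sub_right, real_inner_smul_right, real_inner_self_eq_norm_sq]
  have hAdH2 : ⟪A dH, A dH⟫ = ‖H dH‖ ^ 2 - 2 * m * ⟪dH, H dH⟫ + m ^ 2 * ‖dH‖ ^ 2 := by
    rw [hAapp]
    simp only [inner_sub_left, inner_sub_right, real_inner_smul_left, real_inner_smul_right]
    rw [real_inner_comm (H dH) dH, real_inner_self_eq_norm_sq dH,
      real_inner_self_eq_norm_sq (H dH)]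
    ring
  have hf2 : ‖H dH‖ ^ 2 + m * M * ‖dH‖ ^ 2 ≤ (M + m) * ⟪dH, H dH⟫ := by
    rw [hAdH1, hAdH2] at hAbound
    nlinarith [hAbound]
  have hf1 : ‖dI‖ ^ 2 ≤ ‖dI‖ * ‖dH‖ + ‖dI‖ * ‖H dH‖ - ⟪dH, H dH⟫ := by
    have c1 : ⟪dI, dH⟫ ≤ ‖dI‖ * ‖dH‖ := real_inner_le_norm dI dH
    have c2 : ⟪dI, H dH⟫ ≤ ‖dI‖ * ‖H dH‖ := real_inner_le_norm dI (H dH)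
    linarith [hsum]
  have hDnn : (0:ℝ) ≤ 1 - 2 / M + 1 / m ^ 2 := by
    have h1 : 2 / M ≤ 2 / m := div_le_div_of_nonneg_left (by norm_num) hm hmM
    have h2 : (0:ℝ) ≤ (1 - 1 / m) ^ 2 := sq_nonneg _
    have h3 : ((1:ℝ) - 1 / m) ^ 2 = 1 - 2 / m + 1 / m ^ 2 := by ring
    linarith
  exact scalar_key m M (Real.sqrt (1 - 2 / M + 1 / m ^ 2)) ‖dI‖ ‖dH‖ ‖H dH‖ ⟪dH, H dH⟫
    hm hmM (Real.sqrt_nonneg _) (Real.sq_sqrt hDnn) (norm_nonneg _) (norm_nonneg _)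
    (norm_nonneg _) hf1 hf2 (hHup dH)
end

section
/- For the sequence {x^k} generated by randomized BCD with Armijo line search (Algorithm 1) on a lower-bounded F = f + ψ with positive semidefinite H_i^k, the sum Σ_{k=0}^T |E[α_{i_k}^k Q_{i_k}^k(d_{i_k}^k)]| ≤ (F(x^0) − F*)/γ for every T, and consequently min_{0≤k≤T} |E[α_{i_k}^k Q_{i_k}^k(d_{i_k}^k)]| ≤ (F(x^0) − F*)/(γ(T+1)) and E[α_{i_k}^k Q_{i_k}^k(d_{i_k}^k)] → 0. -/
open Filter

/-- Along Algorithm 1, letting `EF k` denote the expected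
objective value `E[F(x^k)]` and `q k` the expected model decrease
`E[α_{i_k}^k Q_{i_k}^k(d_{i_k}^k)]` (which is nonpositive, and satisfies the
expected Armijo decrease `EF (k+1) ≤ EF k + γ q k`), with `F` lower bounded
by `F*`: `∑_{k=0}^T |q k| ≤ (F(x⁰) − F*)/γ` for every `T`, hence
`min_{0≤k≤T} |q k| ≤ (F(x⁰) − F*)/(γ(T+1))`, and `q k → 0`. -/
theorem stmt18 (γ Fstar : ℝ) (hγ0 : 0 < γ) (hγ1 : γ < 1)
    (EF q : ℕ → ℝ)
    (hq : ∀ k, q k ≤ 0)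
    (hdec : ∀ k, EF (k + 1) ≤ EF k + γ * q k)
    (hlb : ∀ k, Fstar ≤ EF k) :
    (∀ T : ℕ, ∑ k ∈ Finset.range (T + 1), |q k| ≤ (EF 0 - Fstar) / γ) ∧
    (∀ T : ℕ, ∃ k ≤ T, |q k| ≤ (EF 0 - Fstar) / (γ * (T + 1))) ∧
    Tendsto q atTop (nhds 0) := by
  have key : ∀ n : ℕ, ∑ k ∈ Finset.range n, γ * |q k| ≤ EF 0 - EF n := by
    intro n
    induction n with
    | zero => simp
    | succ n ih =>
      rw [Finset.sum_range_succ]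
      have : γ * |q n| ≤ EF n - EF (n + 1) := by
        have := hdec n
        have habs : |q n| = -q n := abs_of_nonpos (hq n)
        rw [habs]; nlinarith
      linarith
  have hsum : ∀ n : ℕ, ∑ k ∈ Finset.range n, |q k| ≤ (EF 0 - Fstar) / γ := by
    intro n
    rw [le_div_iff₀ hγ0]
    have := key n
    have := hlb n
    calc (∑ k ∈ Finset.range n, |q k|) * γ = ∑ k ∈ Finset.range n, γ * |q k| := by
          rw [Finset.sum_mul]; congr 1; ext k; ring
      _ ≤ EF 0 - Fstar := by linarith
  refine ⟨fun T => hsum (T + 1), ?_, ?_⟩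
  · intro T
    obtain ⟨k, hk, hmin⟩ := Finset.exists_min_image (Finset.range (T + 1))
      (fun k => |q k|) (by simp)
    refine ⟨k, by simpa [Nat.lt_succ_iff] using Finset.mem_range.mp hk, ?_⟩
    have hcard : ((T : ℝ) + 1) * |q k| ≤ ∑ j ∈ Finset.range (T + 1), |q j| := by
      have := Finset.card_nsmul_le_sum (Finset.range (T + 1)) (fun j => |q j|) (|q k|)
        (fun j hj => hmin j hj)
      simpa [nsmul_eq_mul, Finset.card_range, add_comm] using this
    have h1 : (0:ℝ) < (T:ℝ) + 1 := by positivity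
    rw [le_div_iff₀ (by positivity)]
    have := hsum (T + 1)
    calc |q k| * (γ * ((T:ℝ) + 1)) = (((T:ℝ) + 1) * |q k|) * γ := by ring
      _ ≤ (∑ j ∈ Finset.range (T + 1), |q j|) * γ := by
          apply mul_le_mul_of_nonneg_right hcard hγ0.le
      _ ≤ EF 0 - Fstar := by
          rw [← le_div_iff₀ hγ0] at *; exact this
  · have hsummable : Summable (fun k => |q k|) :=
      summable_of_sum_range_le (fun k => abs_nonneg _) hsum
    have h0 : Tendsto (fun k => |q k|) atTop (nhds 0) := hsummable.tendsto_atTop_zero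
    exact tendsto_zero_iff_abs_tendsto_zero q |>.mpr h0
end
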